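/- arXiv:1707.08288 — 6 statements merged into one kernel-verified Lean document; each statement's English description precedes it below -/
import Mathlib

section
/- Let L = (L₁,…,L₅) ∈ ℝ⁵. Then L satisfies L₁ = (2√3 − 3)L₂ + L₄, L₂ = L₃, L₄ = L₅ and L₄ > L₂ > 0 if and only if there exist real numbers α, β with β > (3 + 2√3)α > 0 such that L = α·v_I + β·v_II. (Equivalence of statements (ii) and (iii) of Lemma 1.) -/
noncomputable def vI : EuclideanSpace ℝ (Fin 5) :=
  WithLp.toLp 2 ![2, -(3 + 2 * Real.sqrt 3), -(3 + 2 * Real.sqrt 3), 5, 5]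

noncomputable def vII : EuclideanSpace ℝ (Fin 5) :=
  WithLp.toLp 2 ![2 * (Real.sqrt 3 - 1), 1, 1, 1, 1]

/-!
Write `c = 3 + 2√3`. The coordinates of `α • vI + β • vII` are
`(2α + 2(√3 - 1)β, β - cα, β - cα, β + 5α, β + 5α)`, and since `(2√3 - 3) c = 3` these
satisfy the linear relations of (ii) for all `α, β`. Conversely the map `(α, β) ↦ (L₂, L₄)`
is invertible, with `α = (L₄ - L₂) / (5 + c)` and `β = L₂ + cα`, so the two strict
inequalities `L₄ > L₂ > 0` translate exactly into `α > 0` and `β > cα`.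
-/

lemma two_mul_sqrt_three_sub_three_mul : (2 * √3 - 3) * (3 + 2 * √3) = 3 := by
  linear_combination 4 * Real.sq_sqrt (show (0 : ℝ) ≤ 3 by norm_num)

lemma eq_smul_vI_add_smul_vII_iff (L : EuclideanSpace ℝ (Fin 5)) (α β : ℝ) :
    L = α • vI + β • vII ↔
      L 0 = 2 * α + 2 * (√3 - 1) * β ∧ L 1 = β - (3 + 2 * √3) * α ∧
        L 2 = β - (3 + 2 * √3) * α ∧ L 3 = β + 5 * α ∧ L 4 = β + 5 * α := by
  constructor
  · rintro rfl
    simp only [vI, vII, PiLp.add_apply, PiLp.smul_apply, smul_eq_mul]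
    refine ⟨?_, ?_, ?_, ?_, ?_⟩ <;> simp <;> ring
  · rintro ⟨h0, h1, h2, h3, h4⟩
    ext i
    fin_cases i <;> simp [vI, vII, h0, h1, h2, h3, h4] <;> ring

theorem lemma1_ii_iff_iii (L : EuclideanSpace ℝ (Fin 5)) :
    (L 0 = (2 * Real.sqrt 3 - 3) * L 1 + L 3 ∧ L 1 = L 2 ∧ L 3 = L 4 ∧
      L 3 > L 1 ∧ L 1 > 0) ↔
    (∃ α β : ℝ, β > (3 + 2 * Real.sqrt 3) * α ∧ (3 + 2 * Real.sqrt 3) * α > 0 ∧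
      L = α • vI + β • vII) := by
  have hc := two_mul_sqrt_three_sub_three_mul
  have hc_pos : 0 < 3 + 2 * √3 := by positivity
  constructor
  · rintro ⟨h0, h12, h34, h31, h1⟩
    set α := (L 3 - L 1) / (8 + 2 * √3) with hα
    have hα_pos : 0 < α := div_pos (by linarith) (by positivity)
    have h31_eq : L 3 - L 1 = (8 + 2 * √3) * α := by
      rw [hα, mul_div_cancel₀]; positivity
    refine ⟨α, L 1 + (3 + 2 * √3) * α, by linarith, mul_pos hc_pos hα_pos, ?_⟩
    rw [eq_smul_vI_add_smul_vII_iff]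
    refine ⟨?_, by ring, by rw [← h12]; ring, by linarith, by linarith⟩
    linear_combination h0 + h31_eq - α * hc
  · rintro ⟨α, β, hβ, hα, hL⟩
    obtain ⟨h0, h1, h2, h3, h4⟩ := (eq_smul_vI_add_smul_vII_iff L α β).1 hL
    have hα_pos : 0 < α := pos_of_mul_pos_right hα hc_pos.le
    refine ⟨?_, h1.trans h2.symm, h3.trans h4.symm, by linarith, by linarith⟩
    linear_combination h0 - (2 * √3 - 3) * h1 - h3 + α * hc
end

section
/- (Lemma 4.) The linear span of {v_II} in ℝ⁵ equals the intersection of the linear span of {v_I, v_II} with the linear span of {v_III, v_II}; that is, span{v_II} = span{v_I, v_II} ∩ span{v_III, v_II}. -/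
noncomputable def vIII : EuclideanSpace ℝ (Fin 5) :=
  WithLp.toLp 2 ![2, 5, 5, -(3 + 2 * Real.sqrt 3), -(3 + 2 * Real.sqrt 3)]

/-! Both `vI` and `vIII` are orthogonal to `vII` and they are not parallel. If
`a • vI + b • vII = c • vIII + d • vII`, then `a • vI - c • vIII` lies both in `span {vII}` and in
its orthogonal complement, so it vanishes, and linear independence of `vI, vIII` forces `a = 0`. -/

open Submodule

theorem Submodule.span_pair_inf_span_pair_of_inner_eq_zero {𝕜 E : Type*} [RCLike 𝕜]
    [NormedAddCommGroup E] [InnerProductSpace 𝕜 E] {u v w : E}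
    (hu : inner 𝕜 u w = 0) (hv : inner 𝕜 v w = 0) (huv : LinearIndependent 𝕜 ![u, v]) :
    span 𝕜 {u, w} ⊓ span 𝕜 {v, w} = span 𝕜 {w} := by
  refine le_antisymm ?_ (le_inf (span_mono (by simp)) (span_mono (by simp)))
  rintro x ⟨hxu, hxv⟩
  obtain ⟨a, b, rfl⟩ := mem_span_pair.mp hxu
  obtain ⟨c, d, hx⟩ := mem_span_pair.mp hxv
  have hdiff : a • u + (-c) • v = (d - b) • w := by
    linear_combination (norm := module) -hx
  have hperp : a • u + (-c) • v ∈ (𝕜 ∙ w)ᗮ :=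
    add_mem (smul_mem _ _ (mem_orthogonal_singleton_iff_inner_left.mpr hu))
      (smul_mem _ _ (mem_orthogonal_singleton_iff_inner_left.mpr hv))
  have hmem : a • u + (-c) • v ∈ 𝕜 ∙ w := hdiff ▸ smul_mem _ _ (mem_span_singleton_self w)
  have hzero : a • u + (-c) • v = 0 := by
    simpa using (inf_orthogonal_eq_bot (𝕜 ∙ w)).le ⟨hmem, hperp⟩
  obtain ⟨rfl, -⟩ := LinearIndependent.pair_iff.mp huv a (-c) hzero
  simpa using mem_span_singleton.mpr ⟨b, rfl⟩

theorem inner_vI_vII : inner ℝ vI vII = 0 := by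
  simp only [vI, vII, PiLp.inner_apply, RCLike.inner_apply, Real.ringHom_apply, Fin.sum_univ_five,
    Matrix.cons_val]
  ring

theorem inner_vIII_vII : inner ℝ vIII vII = 0 := by
  simp only [vIII, vII, PiLp.inner_apply, RCLike.inner_apply, Real.ringHom_apply, Fin.sum_univ_five,
    Matrix.cons_val]
  ring

theorem linearIndependent_vI_vIII : LinearIndependent ℝ ![vI, vIII] := by
  refine LinearIndependent.pair_iff.mpr fun s t hst => ?_
  have h0 := congrArg (· 0) hst
  have h1 := congrArg (· 1) hst
  simp only [vI, vIII, PiLp.add_apply, PiLp.smul_apply, PiLp.zero_apply, smul_eq_mul,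
    Matrix.cons_val] at h0 h1
  obtain rfl : t = -s := by linarith
  have hmul : s * (2 * √3 + 8) = 0 := by linarith
  have hs : s = 0 := (mul_eq_zero.mp hmul).resolve_right (by positivity)
  exact ⟨hs, by rw [hs, neg_zero]⟩

theorem lemma4_span_inter :
    Submodule.span ℝ ({vII} : Set (EuclideanSpace ℝ (Fin 5))) =
      Submodule.span ℝ ({vI, vII} : Set (EuclideanSpace ℝ (Fin 5))) ⊓
        Submodule.span ℝ ({vIII, vII} : Set (EuclideanSpace ℝ (Fin 5))) :=
  (span_pair_inf_span_pair_of_inner_eq_zero inner_vI_vII inner_vIII_vII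
    linearIndependent_vI_vIII).symm
end

section
/- (Theorem 5, at the point v_II.) The set 𝓛 ⊂ ℝ⁵ is not locally-analytic at v_II: there do not exist an open neighborhood U ⊆ ℝ⁵ of the point v_II and a real-analytic function φ : ℝ⁵ → ℝ (analytic on all of ℝ⁵) such that 𝓛 ∩ U = {x ∈ ℝ⁵ : φ(x) = 0} ∩ U. -/
def LsetI : Set (EuclideanSpace ℝ (Fin 5)) :=
  {p | ∃ α β : ℝ, β > (3 + 2 * Real.sqrt 3) * α ∧ (3 + 2 * Real.sqrt 3) * α > 0 ∧
    p = α • vI + β • vII}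

def LsetII : Set (EuclideanSpace ℝ (Fin 5)) :=
  {p | ∃ γ : ℝ, γ > 0 ∧ p = γ • vII}

def LsetIII : Set (EuclideanSpace ℝ (Fin 5)) :=
  {p | ∃ δ ε : ℝ, ε > (3 + 2 * Real.sqrt 3) * δ ∧ (3 + 2 * Real.sqrt 3) * δ > 0 ∧
    p = δ • vIII + ε • vII}

def Lset : Set (EuclideanSpace ℝ (Fin 5)) := LsetI ∪ LsetII ∪ LsetIII

/-!
Along the line `t ↦ vII + t • vI`, the points with small `t > 0` lie in `𝓛_I`, while no point
with `t < 0` lies in `𝓛`. If `𝓛` were the zero set of an analytic `φ` near `vII`, then `φ`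
would vanish on a segment of this line, hence on the whole line by the identity theorem, so
`𝓛` would also contain the points with small `t < 0`.
-/

open Filter Topology

section AnalyticZeroSet

variable {E F : Type*} [NormedAddCommGroup E] [NormedSpace ℝ E]
  [NormedAddCommGroup F] [NormedSpace ℝ F] {φ : E → F} {x v : E}

theorem eq_zero_on_line_of_frequently_eq_zero (hφ : ∀ y, AnalyticAt ℝ φ y)
    (h : ∃ᶠ t in 𝓝[≠] (0 : ℝ), φ (x + t • v) = 0) (t : ℝ) : φ (x + t • v) = 0 := by
  have hline : AnalyticOnNhd ℝ (fun s : ℝ => φ (x + s • v)) Set.univ := fun s _ =>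
    (hφ _).comp (analyticAt_const.add (analyticAt_id.smul analyticAt_const))
  exact hline.eqOn_zero_of_preconnected_of_frequently_eq_zero isPreconnected_univ
    (Set.mem_univ 0) h (Set.mem_univ t)

theorem eventually_add_smul_mem_of_eq_zeroSet {S U : Set E} (hU : IsOpen U) (hxU : x ∈ U)
    (hφ : ∀ y, AnalyticAt ℝ φ y) (hSU : S ∩ U = {y | φ y = 0} ∩ U)
    (hS : ∀ᶠ t in 𝓝[>] (0 : ℝ), x + t • v ∈ S) : ∀ᶠ t in 𝓝 (0 : ℝ), x + t • v ∈ S := by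
  have hcont : Continuous fun t : ℝ => x + t • v := by fun_prop
  have hlineU : ∀ᶠ t in 𝓝 (0 : ℝ), x + t • v ∈ U :=
    hcont.continuousAt.preimage_mem_nhds (by simpa using hU.mem_nhds hxU)
  have hS_iff : ∀ y ∈ U, y ∈ S ↔ φ y = 0 := fun y hy => by
    simpa [hy] using Set.ext_iff.mp hSU y
  have hzero_right : ∀ᶠ t in 𝓝[>] (0 : ℝ), φ (x + t • v) = 0 := by
    filter_upwards [hS, nhdsWithin_le_nhds hlineU] with t htS htU
    exact (hS_iff _ htU).mp htS
  have hzero := eq_zero_on_line_of_frequently_eq_zero hφ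
    (hzero_right.frequently.filter_mono (nhdsWithin_mono _ fun t ht => ne_of_gt ht))
  filter_upwards [hlineU] with t htU
  exact (hS_iff _ htU).mpr (hzero t)

end AnalyticZeroSet

theorem one_lt_sqrt_three : 1 < Real.sqrt 3 := by
  rw [Real.lt_sqrt zero_le_one]; norm_num

theorem vII_add_smul_vI_mem_LsetI {t : ℝ} (ht₀ : 0 < t) (ht : (3 + 2 * Real.sqrt 3) * t < 1) :
    vII + t • vI ∈ LsetI :=
  ⟨t, 1, ht, by nlinarith [one_lt_sqrt_three], by rw [one_smul, add_comm]⟩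

theorem vII_add_smul_vI_notMem_Lset {t : ℝ} (ht : t < 0) : vII + t • vI ∉ Lset := by
  have hs := one_lt_sqrt_three
  rintro ((⟨α, β, -, hα, h⟩ | ⟨γ, -, h⟩) | ⟨δ, ε, -, hδ, h⟩)
  all_goals
    have h0 := congrArg (· 0) h
    have h1 := congrArg (· 1) h
    have h3 := congrArg (· 3) h
    simp only [vI, vII, vIII, PiLp.add_apply, PiLp.smul_apply, smul_eq_mul, Matrix.cons_val,
      Matrix.cons_val_zero, Matrix.cons_val_one, mul_one] at h0 h1 h3
  case inl.inl => nlinarith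
  case inl.inr => nlinarith
  case inr =>
    -- coordinates 1 and 3 force `δ = -t`, and then coordinate 0 forces `t = 0`
    have hδt : δ = -t := by
      have : (8 + 2 * Real.sqrt 3) * (δ + t) = 0 := by linarith
      linarith [(mul_eq_zero.mp this).resolve_left (by positivity)]
    subst hδt
    have : t * (1 + (Real.sqrt 3 - 1) ^ 2) = 0 := by
      linear_combination (1/4 : ℝ) * h0 - (Real.sqrt 3 - 1) / 2 * h3
    exact (mul_neg_of_neg_of_pos ht (by positivity)).ne this

theorem eventually_vII_add_smul_vI_mem_Lset : ∀ᶠ t in 𝓝[>] (0 : ℝ), vII + t • vI ∈ Lset := by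
  have hc : 0 < 3 + 2 * Real.sqrt 3 := by positivity
  filter_upwards [Ioo_mem_nhdsGT (one_div_pos.mpr hc)] with t ⟨ht₀, ht⟩
  exact .inl (.inl (vII_add_smul_vI_mem_LsetI ht₀ ((lt_div_iff₀' hc).mp ht)))

theorem Lset_not_locally_analytic_at_vII :
    ¬ ∃ (U : Set (EuclideanSpace ℝ (Fin 5))) (φ : EuclideanSpace ℝ (Fin 5) → ℝ),
      IsOpen U ∧ vII ∈ U ∧ (∀ x, AnalyticAt ℝ φ x) ∧
      Lset ∩ U = {x | φ x = 0} ∩ U := by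
  rintro ⟨U, φ, hU, hvU, hφ, hLU⟩
  have hline : ∀ᶠ t in 𝓝 (0 : ℝ), vII + t • vI ∈ Lset :=
    eventually_add_smul_mem_of_eq_zeroSet hU hvU hφ hLU eventually_vII_add_smul_vI_mem_Lset
  obtain ⟨t, htL, ht⟩ :=
    ((hline.filter_mono nhdsWithin_le_nhds).and (self_mem_nhdsWithin (s := Set.Iio 0))).exists
  exact vII_add_smul_vI_notMem_Lset ht htL
end

section
/- Let 0 < x < y and let P be the Type I polytope with vertices A, B, C, D, E, F. Then the exposed face of P in the direction n₁ = (0,0,−1), namely the set {p ∈ P : ∀ q ∈ P, ⟪n₁, q⟫ ≤ ⟪n₁, p⟫}, equals the rectangle convexHull{A, B, C, D}. -/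
/-!
The function `height p = p 2` is `-⟪n₁, p⟫`; it is nonnegative on the vertices and vanishes
exactly on the base vertices `A, B, C, D`. For a linear `f ≥ 0` on `s` that vanishes somewhere
on `s`, the minimizers of `f` on `conv s` form `conv s ∩ {f = 0}`, and this equals
`conv {v ∈ s | f v = 0}`: a point of `conv s` lies on a segment from `conv {f = 0}` to
`conv {f > 0}`, and `f p = 0` forces the weight of the second endpoint to vanish.
-/

open Set

section

variable {𝕜 E : Type*} [Field 𝕜] [LinearOrder 𝕜] [IsStrictOrderedRing 𝕜] [AddCommGroup E]
  [Module 𝕜 E]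

theorem convexHull_sep_eq_zero_of_nonneg (f : E →ₗ[𝕜] 𝕜) {s : Set E} (hs : ∀ v ∈ s, 0 ≤ f v) :
    {p ∈ convexHull 𝕜 s | f p = 0} = convexHull 𝕜 {v ∈ s | f v = 0} := by
  set S := {v ∈ s | f v = 0}
  set T := {v ∈ s | 0 < f v}
  have hsST : s = S ∪ T := by
    ext v
    simp only [S, T, mem_union, mem_sep_iff, ← and_or_left, iff_self_and]
    exact fun hv => (hs v hv).eq_or_lt.imp Eq.symm id
  have hS : ∀ q ∈ convexHull 𝕜 S, f q = 0 := fun q hq =>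
    convexHull_min (fun v hv => hv.2) (convex_hyperplane f.isLinear 0) hq
  have hT : ∀ q ∈ convexHull 𝕜 T, 0 < f q := fun q hq =>
    convexHull_min (fun v hv => hv.2) (convex_halfSpace_gt f.isLinear 0) hq
  refine subset_antisymm ?_ fun p hp => ⟨convexHull_mono (sep_subset _ _) hp, hS p hp⟩
  rintro p ⟨hp, hfp⟩
  rcases S.eq_empty_or_nonempty with hS₀ | hS₀
  · rw [hsST, hS₀, empty_union] at hp
    exact absurd hfp (hT p hp).ne'
  rcases T.eq_empty_or_nonempty with hT₀ | hT₀
  · rwa [hsST, hT₀, union_empty] at hp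
  rw [hsST, convexHull_union hS₀ hT₀, mem_convexJoin] at hp
  obtain ⟨u, hu, v, hv, a, b, -, hb, hab, rfl⟩ := hp
  obtain rfl : b = 0 := by
    rw [map_add, map_smul, map_smul, hS u hu, smul_zero, zero_add, smul_eq_mul] at hfp
    exact (mul_eq_zero.mp hfp).resolve_right (hT v hv).ne'
  rw [add_zero] at hab
  rwa [hab, one_smul, zero_smul, add_zero]

theorem setOf_forall_le_convexHull_eq_of_nonneg (f : E →ₗ[𝕜] 𝕜) {s : Set E}
    (hs : ∀ v ∈ s, 0 ≤ f v) (h₀ : ∃ v ∈ s, f v = 0) :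
    {p ∈ convexHull 𝕜 s | ∀ q ∈ convexHull 𝕜 s, f p ≤ f q} =
      convexHull 𝕜 {v ∈ s | f v = 0} := by
  rw [← convexHull_sep_eq_zero_of_nonneg f hs]
  have hnonneg : ∀ q ∈ convexHull 𝕜 s, 0 ≤ f q := fun q hq =>
    convexHull_min hs (convex_halfSpace_ge f.isLinear 0) hq
  obtain ⟨v₀, hv₀, hfv₀⟩ := h₀
  ext p
  refine and_congr_right fun hp => ⟨fun h => ?_, fun h q hq => h ▸ hnonneg q hq⟩
  exact le_antisymm (hfv₀ ▸ h v₀ (subset_convexHull 𝕜 s hv₀)) (hnonneg p hp)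

end

theorem typeI_exposed_face_n1_general (x y : ℝ) (hx : 0 < x)
    (A B C D E F : EuclideanSpace ℝ (Fin 3))
    (hA : A = !₂[y, -x, 0]) (hB : B = !₂[y, x, 0]) (hC : C = !₂[-y, x, 0])
    (hD : D = !₂[-y, -x, 0]) (hE : E = !₂[y - x, 0, x]) (hF : F = !₂[-(y - x), 0, x])
    (P : Set (EuclideanSpace ℝ (Fin 3)))
    (hP : P = convexHull ℝ {A, B, C, D, E, F})
    (n₁ : EuclideanSpace ℝ (Fin 3)) (hn₁ : n₁ = !₂[0, 0, -1]) :
    {p ∈ P | ∀ q ∈ P, (inner ℝ n₁ q : ℝ) ≤ inner ℝ n₁ p} =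
      convexHull ℝ {A, B, C, D} := by
  let height : EuclideanSpace ℝ (Fin 3) →ₗ[ℝ] ℝ := (EuclideanSpace.proj (2 : Fin 3)).toLinearMap
  have hinner : ∀ q, (inner ℝ n₁ q : ℝ) = -height q := by
    simp [hn₁, height, PiLp.inner_apply, Fin.sum_univ_three]
  have hs : ∀ v ∈ ({A, B, C, D, E, F} : Set _), 0 ≤ height v := by
    rintro v (rfl | rfl | rfl | rfl | rfl | rfl) <;>
      simp [height, hA, hB, hC, hD, hE, hF, hx.le]
  have hbase : {v ∈ ({A, B, C, D, E, F} : Set _) | height v = 0} = {A, B, C, D} := by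
    ext v
    simp only [mem_insert_iff, mem_singleton_iff]
    constructor
    · rintro ⟨hv | hv | hv | hv | hv | hv, hv₀⟩ <;> subst hv <;> simp_all [height, hx.ne']
    · rintro (rfl | rfl | rfl | rfl) <;> simp [height, hA, hB, hC, hD]
  subst hP
  simp only [hinner, neg_le_neg_iff]
  have hA₀ : ∃ v ∈ ({A, B, C, D, E, F} : Set _), height v = 0 := ⟨A, by simp, by simp [height, hA]⟩
  rw [setOf_forall_le_convexHull_eq_of_nonneg height hs hA₀, hbase]

theorem typeI_exposed_face_n1 (x y : ℝ) (hx : 0 < x) (hxy : x < y)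
    (A B C D E F : EuclideanSpace ℝ (Fin 3))
    (hA : A = !₂[y, -x, 0]) (hB : B = !₂[y, x, 0]) (hC : C = !₂[-y, x, 0])
    (hD : D = !₂[-y, -x, 0]) (hE : E = !₂[y - x, 0, x]) (hF : F = !₂[-(y - x), 0, x])
    (P : Set (EuclideanSpace ℝ (Fin 3)))
    (hP : P = convexHull ℝ {A, B, C, D, E, F})
    (n₁ : EuclideanSpace ℝ (Fin 3)) (hn₁ : n₁ = !₂[0, 0, -1]) :
    {p ∈ P | ∀ q ∈ P, (inner ℝ n₁ q : ℝ) ≤ inner ℝ n₁ p} =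
      convexHull ℝ {A, B, C, D} :=
  typeI_exposed_face_n1_general x y hx A B C D E F hA hB hC hD hE hF P hP n₁ hn₁
end

section
/- Let 0 < x < y and let P be the Type I polytope with vertices A, B, C, D, E, F. Then the exposed face of P in the direction n₂ = (1/√2, 0, 1/√2), namely the set {p ∈ P : ∀ q ∈ P, ⟪n₂, q⟫ ≤ ⟪n₂, p⟫}, equals the triangle convexHull{A, B, E}. -/
/-! Up to the factor `1/√2`, `⟪n₂, p⟫` is `p₀ + p₂`, which equals `y` at `A`, `B`, `E` and is
strictly smaller at `C`, `D`, `F` (namely `-y`, `-y`, `2x - y`). A linear functional that is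
constant on `s` and strictly below that constant on `t` is maximised over `convexHull (s ∪ t)`
exactly on `convexHull s`: in a convex combination `a • u + b • v` with `u ∈ convexHull s`,
`v ∈ convexHull t`, the maximum is only reached when `b = 0`. -/

open Set

section LinearMap
variable {𝕜 E : Type*} [Field 𝕜] [LinearOrder 𝕜] [IsStrictOrderedRing 𝕜] [AddCommGroup E]
  [Module 𝕜 E] {s t : Set E} {c : 𝕜}

theorem convexHull_union_inter_preimage_singleton (l : E →ₗ[𝕜] 𝕜) (hs : ∀ a ∈ s, l a = c)
    (ht : ∀ b ∈ t, l b < c) : convexHull 𝕜 (s ∪ t) ∩ l ⁻¹' {c} = convexHull 𝕜 s := by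
  have hs' : convexHull 𝕜 s ⊆ l ⁻¹' {c} := convexHull_min hs (convex_hyperplane l.isLinear c)
  have ht' : convexHull 𝕜 t ⊆ {p | l p < c} :=
    convexHull_min ht (convex_halfSpace_lt l.isLinear c)
  refine subset_antisymm ?_ (subset_inter (convexHull_mono subset_union_left) hs')
  rcases t.eq_empty_or_nonempty with rfl | ht₀
  · rw [union_empty]
    exact inter_subset_left
  rcases s.eq_empty_or_nonempty with rfl | hs₀
  · rintro p ⟨hp, hpc⟩
    rw [empty_union] at hp
    exact absurd (hpc : l p = c) (ht' hp).ne
  rintro _ ⟨hp, hpc⟩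
  rw [convexHull_union hs₀ ht₀, mem_convexJoin] at hp
  obtain ⟨u, hu, v, hv, a, b, -, -, hab, rfl⟩ := hp
  have hlu : l u = c := hs' hu
  have hlv : l v < c := ht' hv
  have hpc : a * c + b * l v = c := by simpa [hlu] using hpc
  have hb : b * (c - l v) = 0 := by linear_combination c * hab - hpc
  obtain rfl : b = 0 := (mul_eq_zero.1 hb).resolve_right (sub_pos.2 hlv).ne'
  obtain rfl : a = 1 := by simpa using hab
  simpa using hu

end LinearMap

namespace ContinuousLinearMap

theorem toExposed_eq_inter_preimage_singleton {𝕜 E : Type*} [TopologicalSpace 𝕜] [Ring 𝕜]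
    [LinearOrder 𝕜] [AddCommMonoid E] [TopologicalSpace E] [Module 𝕜 E] {A : Set E} {c : 𝕜}
    (l : StrongDual 𝕜 E) (h : IsGreatest (l '' A) c) : l.toExposed A = A ∩ l ⁻¹' {c} := by
  obtain ⟨⟨a, ha, rfl⟩, hle⟩ := h
  ext p
  refine ⟨fun ⟨hp, hmax⟩ => ⟨hp, le_antisymm (hle ⟨p, hp, rfl⟩) (hmax a ha)⟩, ?_⟩
  rintro ⟨hp, hpc⟩
  exact ⟨hp, fun q hq => (hpc : l p = l a) ▸ hle ⟨q, hq, rfl⟩⟩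

theorem toExposed_convexHull_union {𝕜 E : Type*} [TopologicalSpace 𝕜] [Field 𝕜] [LinearOrder 𝕜]
    [IsStrictOrderedRing 𝕜] [AddCommGroup E] [TopologicalSpace E] [Module 𝕜 E] {s t : Set E}
    {c : 𝕜} (l : StrongDual 𝕜 E) (hs₀ : s.Nonempty) (hs : ∀ a ∈ s, l a = c)
    (ht : ∀ b ∈ t, l b < c) : l.toExposed (convexHull 𝕜 (s ∪ t)) = convexHull 𝕜 s := by
  have hle : ∀ p ∈ convexHull 𝕜 (s ∪ t), l p ≤ c := by
    refine fun p hp => convexHull_min (fun q hq => ?_) (convex_halfSpace_le l.isLinear c) hp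
    exact hq.elim (fun hq => (hs q hq).le) (fun hq => (ht q hq).le)
  obtain ⟨a, ha⟩ := hs₀
  have hmax : IsGreatest (l '' convexHull 𝕜 (s ∪ t)) c :=
    ⟨⟨a, subset_convexHull 𝕜 _ (Or.inl ha), hs a ha⟩, forall_mem_image.2 hle⟩
  rw [l.toExposed_eq_inter_preimage_singleton hmax]
  exact convexHull_union_inter_preimage_singleton l.toLinearMap hs ht

end ContinuousLinearMap

theorem typeI_exposed_face_n2 (x y : ℝ) (hx : 0 < x) (hxy : x < y)
    (A B C D E F : EuclideanSpace ℝ (Fin 3))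
    (hA : A = ![y, -x, 0]) (hB : B = ![y, x, 0]) (hC : C = ![-y, x, 0])
    (hD : D = ![-y, -x, 0]) (hE : E = ![y - x, 0, x]) (hF : F = ![-(y - x), 0, x])
    (P : Set (EuclideanSpace ℝ (Fin 3)))
    (hP : P = convexHull ℝ {A, B, C, D, E, F})
    (n₂ : EuclideanSpace ℝ (Fin 3))
    (hn₂ : n₂ = ![1 / Real.sqrt 2, 0, 1 / Real.sqrt 2]) :
    {p ∈ P | ∀ q ∈ P, (inner ℝ n₂ q : ℝ) ≤ inner ℝ n₂ p} =
      convexHull ℝ {A, B, E} := by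
  have hn₂_inner (v : EuclideanSpace ℝ (Fin 3)) : inner ℝ n₂ v = (v 0 + v 2) / √2 := by
    simp only [PiLp.inner_apply, Fin.sum_univ_three, hn₂, RCLike.inner_apply, conj_trivial,
      Matrix.cons_val]
    ring
  have hvert : ({A, B, C, D, E, F} : Set (EuclideanSpace ℝ (Fin 3))) = {A, B, E} ∪ {C, D, F} := by
    ext
    simp only [mem_insert_iff, mem_singleton_iff, mem_union]
    tauto
  have hy : 0 < y := hx.trans hxy
  change (innerSL ℝ n₂).toExposed P = _
  rw [hP, hvert]
  refine (innerSL ℝ n₂).toExposed_convexHull_union (c := y / √2) (insert_nonempty _ _) ?_ ?_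
  · rintro v (rfl | rfl | rfl) <;> simp [hn₂_inner, hA, hB, hE]
  · rintro v (rfl | rfl | rfl) <;>
      simp only [coe_innerSL_apply, hn₂_inner, hC, hD, hF, Matrix.cons_val_zero, Matrix.cons_val,
        add_zero, neg_sub] <;> gcongr <;> linarith
end

section
/- Let 0 < x < y and let P be the Type I polytope with vertices A, B, C, D, E, F. Then for a unit vector n ∈ ℝ³, the exposed face of P in direction n, namely {p ∈ P : ∀ q ∈ P, ⟪n, q⟫ ≤ ⟪n, p⟫}, has affine dimension 2 (i.e., the dimension of the direction of its affine span equals 2) if and only if n ∈ {n₁, n₂, n₃, n₄, n₅}. In other words, n₁, …, n₅, and no other unit vectors, are outward face normals of P. -/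
/-!
The exposed face of `P` in direction `n` is the convex hull of the vertices maximising `⟪n, ·⟫`,
so its affine dimension is that of this vertex set; since these vertices lie in a plane orthogonal
to `n`, the dimension is `2` exactly when they are not collinear. Writing `n = (a, b, c)`, the
rectangle `ABCD` attains at most `y|a| + x|b|` and the edge `EF` at most `(y - x)|a| + xc`;
comparing the two and the signs of `a` and `b` shows that away from the five normals the maximising
vertices lie on one edge, while each `nᵢ` is maximised on three non-collinear vertices of a facet.
-/

open RealInnerProductSpace Module

def exposedFace {α β : Type*} [LE β] (f : α → β) (s : Set α) : Set α :=
  {p ∈ s | ∀ q ∈ s, f q ≤ f p}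

section ConvexHull

variable {𝕜 E : Type*} [Field 𝕜] [LinearOrder 𝕜] [IsStrictOrderedRing 𝕜] [AddCommGroup E]
  [Module 𝕜 E]

theorem exposedFace_convexHull (l : E →ₗ[𝕜] 𝕜) (s : Set E) :
    exposedFace l (convexHull 𝕜 s) = convexHull 𝕜 (exposedFace l s) := by
  refine Set.Subset.antisymm ?_ ?_
  · rintro p ⟨hp, hmax⟩
    obtain ⟨ι, _, w, z, hw₀, hw₁, hz, rfl⟩ := mem_convexHull_iff_exists_fintype.mp hp
    have hle : ∀ i, l (z i) ≤ l (∑ i, w i • z i) := fun i ↦ hmax _ (subset_convexHull 𝕜 s (hz i))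
    -- the weighted defects of the `z i` sum to zero, so each vanishes
    have hsum : ∑ i, w i * (l (∑ i, w i • z i) - l (z i)) = 0 := by
      simp only [mul_sub, Finset.sum_sub_distrib, ← Finset.sum_mul, hw₁, one_mul, map_sum,
        map_smul, smul_eq_mul, sub_self]
    have hzero := (Finset.sum_eq_zero_iff_of_nonneg fun i _ ↦
      mul_nonneg (hw₀ i) (sub_nonneg.mpr (hle i))).mp hsum
    rw [← finsum_eq_sum_of_fintype]
    refine (convex_convexHull 𝕜 _).finsum_mem hw₀ (by rwa [finsum_eq_sum_of_fintype]) ?_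
    intro i hi
    have heq : l (z i) = l (∑ i, w i • z i) :=
      (sub_eq_zero.mp ((mul_eq_zero.mp (hzero i (Finset.mem_univ i))).resolve_left hi)).symm
    exact subset_convexHull 𝕜 _ ⟨hz i, fun u hu ↦ heq ▸ hmax u (subset_convexHull 𝕜 s hu)⟩
  · intro p hp
    obtain ⟨v, hv, hvmax⟩ := convexHull_nonempty_iff.mp ⟨p, hp⟩
    refine ⟨convexHull_mono (fun _ hu ↦ hu.1) hp, fun q hq ↦ ?_⟩
    have hq' : l q ≤ l v :=
      convexHull_min hvmax (convex_halfSpace_le l.isLinear _) hq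
    have hp' : l v ≤ l p :=
      convexHull_min (fun u hu ↦ hu.2 v hv) (convex_halfSpace_ge l.isLinear _) hp
    exact hq'.trans hp'

end ConvexHull

section InnerProductSpace

variable {E : Type*} [NormedAddCommGroup E] [InnerProductSpace ℝ E]

theorem exposedFace_inner_smul {c : ℝ} (hc : 0 < c) (m : E) (s : Set E) :
    exposedFace (inner ℝ (c • m)) s = exposedFace (inner ℝ m) s := by
  ext p
  simp only [exposedFace, Set.mem_ofPred_eq, real_inner_smul_left, mul_le_mul_iff_right₀ hc]

theorem inner_eq_of_mem_exposedFace {n p q : E} {s : Set E} (hp : p ∈ exposedFace (inner ℝ n) s)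
    (hq : q ∈ exposedFace (inner ℝ n) s) : ⟪n, p⟫ = ⟪n, q⟫ :=
  le_antisymm (hq.2 p hp.1) (hp.2 q hq.1)

theorem finrank_vectorSpan_eq_two_iff_not_collinear [FiniteDimensional ℝ E]
    (hE : finrank ℝ E = 3) {n : E} (hn : n ≠ 0) {s : Set E}
    (hs : ∀ p ∈ s, ∀ q ∈ s, ⟪n, p⟫ = ⟪n, q⟫) :
    finrank ℝ (vectorSpan ℝ s) = 2 ↔ ¬Collinear ℝ s := by
  have : Fact (finrank ℝ E = 2 + 1) := ⟨hE⟩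
  have hle : vectorSpan ℝ s ≤ (ℝ ∙ n)ᗮ := by
    rw [vectorSpan_def, Submodule.span_le]
    rintro _ ⟨p, hp, q, hq, rfl⟩
    simp [Submodule.mem_orthogonal_singleton_iff_inner_right, inner_sub_right, hs p hp q hq]
  have := (Submodule.finrank_mono hle).trans
    (Submodule.finrank_orthogonal_span_singleton (n := 2) hn).le
  rw [collinear_iff_finrank_le_one]
  omega

theorem not_collinear_exposedFace_of_subset {c : ℝ} (hc : 0 < c) {n m p q r : E} {s : Set E}
    (hn : n = c • m) (hsub : {p, q, r} ⊆ exposedFace (inner ℝ m) s)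
    (hpqr : ¬Collinear ℝ {p, q, r}) :
    ¬Collinear ℝ (exposedFace (inner ℝ n) s) := by
  rw [hn, exposedFace_inner_smul hc]
  exact fun h ↦ hpqr (h.subset hsub)

end InnerProductSpace

theorem not_collinear_of_minor_ne_zero {ι : Type*} {p q r : EuclideanSpace ℝ ι} (i j : ι)
    (h : (q - p) i * (r - p) j - (q - p) j * (r - p) i ≠ 0) : ¬Collinear ℝ {p, q, r} := by
  intro hcol
  obtain ⟨v, hv⟩ := (collinear_iff_of_mem (by simp : p ∈ ({p, q, r} : Set _))).mp hcol
  obtain ⟨s, rfl⟩ := hv q (by simp)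
  obtain ⟨t, rfl⟩ := hv r (by simp)
  apply h
  simp only [vadd_eq_add, add_sub_cancel_right, PiLp.smul_apply, smul_eq_mul]
  ring

theorem eq_one_div_sqrt_two {a : ℝ} (ha : 0 < a) (h : a ^ 2 + a ^ 2 = 1) : a = 1 / √2 := by
  rw [eq_div_iff (by positivity)]
  have hsq : (a * √2) ^ 2 = 1 ^ 2 := by rw [mul_pow, Real.sq_sqrt zero_le_two]; linarith
  exact (pow_left_inj₀ (by positivity) zero_le_one two_ne_zero).mp hsq

theorem inner_vec_three (a b c p q r : ℝ) :
    ⟪(!₂[a, b, c] : EuclideanSpace ℝ (Fin 3)), !₂[p, q, r]⟫ = a * p + b * q + c * r := by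
  simp [PiLp.inner_apply, Fin.sum_univ_three]; ring

def typeIVertices (x y : ℝ) : Set (EuclideanSpace ℝ (Fin 3)) :=
  {!₂[y, -x, 0], !₂[y, x, 0], !₂[-y, x, 0], !₂[-y, -x, 0], !₂[y - x, 0, x], !₂[-(y - x), 0, x]}

def typeINormals : Set (EuclideanSpace ℝ (Fin 3)) :=
  {!₂[0, 0, -1], !₂[1 / √2, 0, 1 / √2], !₂[-(1 / √2), 0, 1 / √2], !₂[0, 1 / √2, 1 / √2],
    !₂[0, -(1 / √2), 1 / √2]}

section TypeI

variable {x y : ℝ}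

theorem forall_mem_typeIVertices {P : EuclideanSpace ℝ (Fin 3) → Prop} :
    (∀ v ∈ typeIVertices x y, P v) ↔ P !₂[y, -x, 0] ∧ P !₂[y, x, 0] ∧ P !₂[-y, x, 0] ∧
      P !₂[-y, -x, 0] ∧ P !₂[y - x, 0, x] ∧ P !₂[-(y - x), 0, x] := by
  simp [typeIVertices]

theorem not_collinear_exposedFace_typeIVertices (hx : 0 < x) (hxy : x < y)
    {n : EuclideanSpace ℝ (Fin 3)} (hn : n ∈ typeINormals) :
    ¬Collinear ℝ (exposedFace (inner ℝ n) (typeIVertices x y)) := by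
  have hxy₀ : 0 < x * y := mul_pos hx (hx.trans hxy)
  have hs : (0 : ℝ) < 1 / √2 := by positivity
  simp only [typeINormals, Set.mem_insert_iff, Set.mem_singleton_iff] at hn
  -- each normal, rescaled, is maximised on three non-collinear vertices of its facet
  rcases hn with rfl | rfl | rfl | rfl | rfl <;> [
    refine not_collinear_exposedFace_of_subset one_pos (m := !₂[0, 0, -1])
      (p := !₂[y, -x, 0]) (q := !₂[y, x, 0]) (r := !₂[-y, x, 0]) ?_ ?_
      (not_collinear_of_minor_ne_zero 0 1 (ne_of_gt ?_));
    refine not_collinear_exposedFace_of_subset hs (m := !₂[1, 0, 1])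
      (p := !₂[y, -x, 0]) (q := !₂[y, x, 0]) (r := !₂[y - x, 0, x]) ?_ ?_
      (not_collinear_of_minor_ne_zero 1 2 (ne_of_gt ?_));
    refine not_collinear_exposedFace_of_subset hs (m := !₂[-1, 0, 1])
      (p := !₂[-y, x, 0]) (q := !₂[-y, -x, 0]) (r := !₂[-(y - x), 0, x]) ?_ ?_
      (not_collinear_of_minor_ne_zero 1 2 (ne_of_lt ?_));
    refine not_collinear_exposedFace_of_subset hs (m := !₂[0, 1, 1])
      (p := !₂[y, x, 0]) (q := !₂[-y, x, 0]) (r := !₂[y - x, 0, x]) ?_ ?_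
      (not_collinear_of_minor_ne_zero 0 1 (ne_of_gt ?_));
    refine not_collinear_exposedFace_of_subset hs (m := !₂[0, -1, 1])
      (p := !₂[y, -x, 0]) (q := !₂[-y, -x, 0]) (r := !₂[y - x, 0, x]) ?_ ?_
      (not_collinear_of_minor_ne_zero 0 1 (ne_of_lt ?_))]
  all_goals first
    | (ext i; fin_cases i <;> simp)
    | (simp; nlinarith)
    | (simp only [Set.insert_subset_iff, Set.singleton_subset_iff, exposedFace,
        Set.mem_ofPred_eq, forall_mem_typeIVertices, inner_vec_three]
       simp only [typeIVertices, Set.mem_insert_iff, Set.mem_singleton_iff, true_or, or_true,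
        true_and]
       refine ⟨?_, ?_, ?_⟩ <;> refine ⟨?_, ?_, ?_, ?_, ?_, ?_⟩ <;> linarith)

theorem mem_typeINormals_of_not_collinear (hx : 0 < x) (hxy : x < y)
    {n : EuclideanSpace ℝ (Fin 3)} (hn : ‖n‖ = 1)
    (hT : ¬Collinear ℝ (exposedFace (inner ℝ n) (typeIVertices x y))) : n ∈ typeINormals := by
  obtain ⟨a, b, c, rfl⟩ : ∃ a b c : ℝ, n = !₂[a, b, c] :=
    ⟨n 0, n 1, n 2, by ext i; fin_cases i <;> rfl⟩
  have habc : a ^ 2 + b ^ 2 + c ^ 2 = 1 := by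
    simpa [Fin.sum_univ_three, hn] using (EuclideanSpace.real_norm_sq_eq !₂[a, b, c]).symm
  have hy : 0 < y := hx.trans hxy
  set T := exposedFace (inner ℝ !₂[a, b, c]) (typeIVertices x y)
  have hpair : ∀ p q, ¬T ⊆ {p, q} := fun p q h ↦ hT ((collinear_pair ℝ p q).subset h)
  have hsub :
      (a < 0 → b < 0 → T ⊆ {!₂[-y, -x, 0], !₂[-(y - x), 0, x]}) ∧
      (a < 0 → 0 < b → T ⊆ {!₂[-y, x, 0], !₂[-(y - x), 0, x]}) ∧
      (0 < a → b < 0 → T ⊆ {!₂[y, -x, 0], !₂[y - x, 0, x]}) ∧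
      (0 < a → 0 < b → T ⊆ {!₂[y, x, 0], !₂[y - x, 0, x]}) ∧
      (a < 0 → b = 0 → c < -a → T ⊆ {!₂[-y, x, 0], !₂[-y, -x, 0]}) ∧
      (0 < a → b = 0 → c < a → T ⊆ {!₂[y, -x, 0], !₂[y, x, 0]}) ∧
      (a = 0 → b < 0 → c < -b → T ⊆ {!₂[y, -x, 0], !₂[-y, -x, 0]}) ∧
      (a = 0 → 0 < b → c < b → T ⊆ {!₂[y, x, 0], !₂[-y, x, 0]}) ∧
      (a + b < c → a - b < c → -a + b < c → -a - b < c →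
        T ⊆ {!₂[y - x, 0, x], !₂[-(y - x), 0, x]}) := by
    refine ⟨?_, ?_, ?_, ?_, ?_, ?_, ?_, ?_, ?_⟩ <;> intros <;> rintro v ⟨hv, hmax⟩ <;>
      simp only [typeIVertices, Set.mem_insert_iff, Set.mem_singleton_iff] at hv <;>
      rcases hv with rfl | rfl | rfl | rfl | rfl | rfl <;>
      first
      | (simp; done)
      | (exfalso; simp only [forall_mem_typeIVertices, inner_vec_three] at hmax; nlinarith)
  obtain ⟨hDF, hCF, hAE, hBE, hCD, hAB, hAD, hBC, hEF⟩ := hsub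
  rcases lt_trichotomy a 0 with ha | rfl | ha <;> rcases lt_trichotomy b 0 with hb | rfl | hb
  · exact absurd (hDF ha hb) (hpair _ _)
  · rcases lt_trichotomy c (-a) with hc | rfl | hc
    · exact absurd (hCD ha rfl hc) (hpair _ _)
    · obtain rfl : a = -(1 / √2) := by
        linarith [eq_one_div_sqrt_two (neg_pos.mpr ha) (by linarith)]
      simp [typeINormals]
    · exact absurd (hEF (by linarith) (by linarith) (by linarith) (by linarith)) (hpair _ _)
  · exact absurd (hCF ha hb) (hpair _ _)
  · rcases lt_trichotomy c (-b) with hc | rfl | hc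
    · exact absurd (hAD rfl hb hc) (hpair _ _)
    · obtain rfl : b = -(1 / √2) := by
        linarith [eq_one_div_sqrt_two (neg_pos.mpr hb) (by linarith)]
      simp [typeINormals]
    · exact absurd (hEF (by linarith) (by linarith) (by linarith) (by linarith)) (hpair _ _)
  · rcases le_or_gt c 0 with hc | hc
    · obtain rfl : c = -1 := by nlinarith
      simp [typeINormals]
    · exact absurd (hEF (by linarith) (by linarith) (by linarith) (by linarith)) (hpair _ _)
  · rcases lt_trichotomy c b with hc | rfl | hc
    · exact absurd (hBC rfl hb hc) (hpair _ _)
    · obtain rfl : c = 1 / √2 := eq_one_div_sqrt_two hb (by linarith)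
      simp [typeINormals]
    · exact absurd (hEF (by linarith) (by linarith) (by linarith) (by linarith)) (hpair _ _)
  · exact absurd (hAE ha hb) (hpair _ _)
  · rcases lt_trichotomy c a with hc | rfl | hc
    · exact absurd (hAB ha rfl hc) (hpair _ _)
    · obtain rfl : c = 1 / √2 := eq_one_div_sqrt_two ha (by linarith)
      simp [typeINormals]
    · exact absurd (hEF (by linarith) (by linarith) (by linarith) (by linarith)) (hpair _ _)
  · exact absurd (hBE ha hb) (hpair _ _)

end TypeI

theorem typeI_face_normals (x y : ℝ) (hx : 0 < x) (hxy : x < y)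
    (A B C D E F : EuclideanSpace ℝ (Fin 3))
    (hA : A = !₂[y, -x, 0]) (hB : B = !₂[y, x, 0]) (hC : C = !₂[-y, x, 0])
    (hD : D = !₂[-y, -x, 0]) (hE : E = !₂[y - x, 0, x]) (hF : F = !₂[-(y - x), 0, x])
    (P : Set (EuclideanSpace ℝ (Fin 3)))
    (hP : P = convexHull ℝ {A, B, C, D, E, F})
    (n₁ n₂ n₃ n₄ n₅ : EuclideanSpace ℝ (Fin 3))
    (hn₁ : n₁ = !₂[0, 0, -1])
    (hn₂ : n₂ = !₂[1 / Real.sqrt 2, 0, 1 / Real.sqrt 2])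
    (hn₃ : n₃ = !₂[-(1 / Real.sqrt 2), 0, 1 / Real.sqrt 2])
    (hn₄ : n₄ = !₂[0, 1 / Real.sqrt 2, 1 / Real.sqrt 2])
    (hn₅ : n₅ = !₂[0, -(1 / Real.sqrt 2), 1 / Real.sqrt 2])
    (n : EuclideanSpace ℝ (Fin 3)) (hn : ‖n‖ = 1) :
    Module.finrank ℝ
        (affineSpan ℝ {p ∈ P | ∀ q ∈ P, (inner ℝ n q : ℝ) ≤ inner ℝ n p}).direction = 2 ↔
      n ∈ ({n₁, n₂, n₃, n₄, n₅} : Set (EuclideanSpace ℝ (Fin 3))) := by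
  subst hA hB hC hD hE hF hP hn₁ hn₂ hn₃ hn₄ hn₅
  have hn₀ : n ≠ 0 := by rintro rfl; simp at hn
  have hface : exposedFace (inner ℝ n) (convexHull ℝ (typeIVertices x y)) =
      convexHull ℝ (exposedFace (inner ℝ n) (typeIVertices x y)) :=
    exposedFace_convexHull (innerₛₗ ℝ n) _
  change finrank ℝ (affineSpan ℝ (exposedFace (inner ℝ n)
    (convexHull ℝ (typeIVertices x y)))).direction = 2 ↔ n ∈ typeINormals
  rw [hface, affineSpan_convexHull, direction_affineSpan,
    finrank_vectorSpan_eq_two_iff_not_collinear finrank_euclideanSpace_fin hn₀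
      fun p hp q hq ↦ inner_eq_of_mem_exposedFace hp hq]
  exact ⟨mem_typeINormals_of_not_collinear hx hxy hn,
    not_collinear_exposedFace_typeIVertices hx hxy⟩
end
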